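/- arXiv:2212.04624 — 2 statements merged into one kernel-verified Lean document; each statement's English description precedes it below -/
import Mathlib

section
/- Let U be a set of feasible objective values (U ⊆ F(Ω)) and let L(B) be an overall lower bound set for F(X*_B), where X*_B is the set of Pareto optimal solutions of F on Ω restricted to B. If for every l ∈ L(B) there exists u ∈ U with u dominating l (u ⪯ l, u ≠ l), then B contains no Pareto optimal solution of F on Ω. -/
/-- Discarding test: if every `l` in an overall lower bound set for `F(X*_B)` is
dominated by some feasible upper bound `u ∈ U ⊆ F(Ω)`, then the subregion `B`
contains no Pareto optimal solution of `F` on `Ω`. -/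
theorem discarding_test (n m : ℕ)
    (F : (Fin n → ℝ) → (Fin m → ℝ)) (Ω B : Set (Fin n → ℝ))
    (U L : Set (Fin m → ℝ))
    (hU : U ⊆ F '' Ω)
    (hL : ∀ x ∈ {x ∈ Ω ∩ B | ¬∃ y ∈ Ω ∩ B, (∀ i, F y i ≤ F x i) ∧ F y ≠ F x},
            ∃ l ∈ L, ∀ i, l i ≤ F x i)
    (hdom : ∀ l ∈ L, ∃ u ∈ U, (∀ i, u i ≤ l i) ∧ u ≠ l) :
    ∀ x ∈ Ω ∩ B, ∃ y ∈ Ω, (∀ i, F y i ≤ F x i) ∧ F y ≠ F x := by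
  intro x hx
  by_cases hp : ∃ y ∈ Ω ∩ B, (∀ i, F y i ≤ F x i) ∧ F y ≠ F x
  · obtain ⟨y, hy, h1, h2⟩ := hp
    exact ⟨y, hy.1, h1, h2⟩
  · obtain ⟨l, hl, hle⟩ := hL x ⟨hx, hp⟩
    obtain ⟨u, hu, hule, hune⟩ := hdom l hl
    obtain ⟨y, hy, hFy⟩ := hU hu
    refine ⟨y, hy, fun i => hFy ▸ le_trans (hule i) (hle i), ?_⟩
    rw [hFy]
    obtain ⟨i, hi⟩ := Function.ne_iff.mp hune
    intro h
    have : u i < l i := lt_of_le_of_ne (hule i) hi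
    have : u i < F x i := lt_of_lt_of_le this (hle i)
    rw [h] at this
    exact lt_irrefl _ this
end

section
/- Let F : ℝⁿ → ℝ^m be Lipschitz and let boxes in B_k covering the Pareto set have widths tending uniformly to 0. Define the lower bound set L_k = {l(B) : B ∈ B_k} via the Lipschitz lower bounds and the upper bound set U_k = {F(c(B)) : B ∈ B_k}. Then the Hausdorff distance between L_k and U_k tends to 0 as k → ∞. -/
/-!
Each lower bound `l(B)` differs from the upper bound `F(c(B))` of the same box only by the
correction `½ min {L₁ ‖b - a‖_∞, L_∞ ‖b - a‖₁}`, which is at most a constant times the width of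
`B`. Matching `l(B)` with `F(c(B))` box by box bounds the Hausdorff distance by `C δ_k`.
-/

open Finset Metric

theorem Metric.hausdorffDist_image_le_of_dist_le {α E : Type*} [PseudoMetricSpace E] {s : Set α}
    {f g : α → E} {r : ℝ} (hr : 0 ≤ r) (h : ∀ p ∈ s, dist (f p) (g p) ≤ r) :
    hausdorffDist (f '' s) (g '' s) ≤ r := by
  refine hausdorffDist_le_of_mem_dist hr ?_ ?_
  · rintro _ ⟨p, hp, rfl⟩
    exact ⟨g p, Set.mem_image_of_mem g hp, h p hp⟩
  · rintro _ ⟨p, hp, rfl⟩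
    exact ⟨f p, Set.mem_image_of_mem f hp, dist_comm (f p) (g p) ▸ h p hp⟩

theorem abs_min_mul_le {x y : ℝ} (L L' : ℝ) (hx : 0 ≤ x) (hy : 0 ≤ y) :
    |min (L * x) (L' * y)| ≤ |L| * x + |L'| * y := by
  have h := abs_min_le_max_abs_abs (a := L * x) (b := L' * y)
  rw [abs_mul, abs_mul, abs_of_nonneg hx, abs_of_nonneg hy] at h
  exact h.trans (max_le_add_of_nonneg (by positivity) (by positivity))

section Box

variable {κ : Type*} {a b : κ → ℝ} {d : ℝ}

theorem abs_sub_le_abs_of_sub_le (hab : ∀ j, a j ≤ b j) (hd : ∀ j, b j - a j ≤ d) (j : κ) :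
    |b j - a j| ≤ |d| := by
  rw [abs_of_nonneg (sub_nonneg.2 (hab j))]
  exact (hd j).trans (le_abs_self d)

variable [Fintype κ]

theorem norm_sub_le_abs_of_sub_le (hab : ∀ j, a j ≤ b j) (hd : ∀ j, b j - a j ≤ d) :
    ‖b - a‖ ≤ |d| :=
  (pi_norm_le_iff_of_nonneg (abs_nonneg d)).2 (abs_sub_le_abs_of_sub_le hab hd)

theorem sum_abs_sub_le_card_mul_abs (hab : ∀ j, a j ≤ b j) (hd : ∀ j, b j - a j ≤ d) :
    ∑ j, |b j - a j| ≤ Fintype.card κ * |d| := by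
  simpa using sum_le_card_nsmul univ _ _ fun j _ => abs_sub_le_abs_of_sub_le hab hd j

/-- With `y = F(c(B))` for the box `B = [a, b]`, the left side is the gap between `l(B)` and
`F(c(B))`. -/
theorem dist_sub_half_min_le {ι : Type*} [Fintype ι] (y L1 Linf : ι → ℝ)
    (hab : ∀ j, a j ≤ b j) (hd : ∀ j, b j - a j ≤ d) :
    dist (fun i => y i - 2⁻¹ * min (L1 i * ‖b - a‖) (Linf i * ∑ j, |b j - a j|)) y ≤
      2⁻¹ * (∑ i, (|L1 i| + Fintype.card κ * |Linf i|)) * |d| := by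
  rw [dist_pi_le_iff (by positivity)]
  intro i
  rw [Real.dist_eq, sub_sub_cancel_left, abs_neg, abs_mul,
    abs_of_pos (by norm_num : (0 : ℝ) < 2⁻¹), mul_assoc]
  gcongr
  calc |min (L1 i * ‖b - a‖) (Linf i * ∑ j, |b j - a j|)|
      ≤ |L1 i| * ‖b - a‖ + |Linf i| * ∑ j, |b j - a j| :=
        abs_min_mul_le _ _ (norm_nonneg _) (sum_nonneg fun j _ => abs_nonneg _)
    _ ≤ |L1 i| * |d| + |Linf i| * (Fintype.card κ * |d|) := by
      gcongr
      exacts [norm_sub_le_abs_of_sub_le hab hd, sum_abs_sub_le_card_mul_abs hab hd]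
    _ = (|L1 i| + Fintype.card κ * |Linf i|) * |d| := by ring
    _ ≤ (∑ i, (|L1 i| + Fintype.card κ * |Linf i|)) * |d| := by
      gcongr
      exact single_le_sum (f := fun i => |L1 i| + Fintype.card κ * |Linf i|)
        (fun i _ => by positivity) (mem_univ i)

end Box

theorem hausdorff_lower_upper_general (n m : ℕ)
    (f : Fin m → (Fin n → ℝ) → ℝ)
    (L1 Linf : Fin m → ℝ)
    (Bc : ℕ → Set ((Fin n → ℝ) × (Fin n → ℝ)))
    (hab : ∀ k, ∀ p ∈ Bc k, ∀ i, p.1 i ≤ p.2 i)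
    (δ : ℕ → ℝ)
    (hwidth : ∀ k, ∀ p ∈ Bc k, ∀ i, p.2 i - p.1 i ≤ δ k)
    (hδ : Filter.Tendsto δ Filter.atTop (nhds 0)) :
    Filter.Tendsto
      (fun k => Metric.hausdorffDist
        ((fun p : (Fin n → ℝ) × (Fin n → ℝ) => fun i =>
            f i ((2⁻¹ : ℝ) • (p.1 + p.2)) -
              2⁻¹ * min (L1 i * ‖p.2 - p.1‖) (Linf i * ∑ j, |p.2 j - p.1 j|)) '' Bc k)
        ((fun p : (Fin n → ℝ) × (Fin n → ℝ) => fun i =>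
            f i ((2⁻¹ : ℝ) • (p.1 + p.2))) '' Bc k))
      Filter.atTop (nhds 0) := by
  set C : ℝ := ∑ i, (|L1 i| + Fintype.card (Fin n) * |Linf i|)
  have hC : 0 ≤ C := sum_nonneg fun i _ => by positivity
  refine squeeze_zero (fun _ => hausdorffDist_nonneg) (g := fun k => 2⁻¹ * C * |δ k|)
    (fun k => hausdorffDist_image_le_of_dist_le (by positivity) fun p hp =>
      dist_sub_half_min_le _ L1 Linf (hab k p hp) (hwidth k p hp)) ?_
  simpa using hδ.abs.const_mul (2⁻¹ * C)

/-- If all boxes (encoded as pairs `(a,b)`) in the collections `B_k` have widths at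
most `δ_k → 0`, then the Hausdorff distance between the Lipschitz lower bound set
`L_k = {l(B) : B ∈ B_k}` and the midpoint upper bound set `U_k = {F(c(B)) : B ∈ B_k}`
tends to `0`. (The norm on `Fin n → ℝ` is the sup norm.) -/
theorem hausdorff_lower_upper (n m : ℕ)
    (f : Fin m → (Fin n → ℝ) → ℝ)
    (L1 Linf : Fin m → ℝ)
    (h1 : ∀ i, ∀ x y : Fin n → ℝ, |f i x - f i y| ≤ L1 i * ‖x - y‖)
    (hinf : ∀ i, ∀ x y : Fin n → ℝ, |f i x - f i y| ≤ Linf i * ∑ j, |x j - y j|)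
    (Bc : ℕ → Set ((Fin n → ℝ) × (Fin n → ℝ)))
    (hfin : ∀ k, (Bc k).Finite) (hne : ∀ k, (Bc k).Nonempty)
    (hab : ∀ k, ∀ p ∈ Bc k, ∀ i, p.1 i ≤ p.2 i)
    (δ : ℕ → ℝ)
    (hwidth : ∀ k, ∀ p ∈ Bc k, ∀ i, p.2 i - p.1 i ≤ δ k)
    (hδ : Filter.Tendsto δ Filter.atTop (nhds 0)) :
    Filter.Tendsto
      (fun k => Metric.hausdorffDist
        ((fun p : (Fin n → ℝ) × (Fin n → ℝ) => fun i =>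
            f i ((2⁻¹ : ℝ) • (p.1 + p.2)) -
              2⁻¹ * min (L1 i * ‖p.2 - p.1‖) (Linf i * ∑ j, |p.2 j - p.1 j|)) '' Bc k)
        ((fun p : (Fin n → ℝ) × (Fin n → ℝ) => fun i =>
            f i ((2⁻¹ : ℝ) • (p.1 + p.2))) '' Bc k))
      Filter.atTop (nhds 0) :=
  hausdorff_lower_upper_general n m f L1 Linf Bc hab δ hwidth hδ
end
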